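/- Let (A, m) be a local noetherian ring, and let P^• and Q^• be two minimal bounded cochain complexes of finite free A-modules. If P^• and Q^• are quasi-isomorphic (i.e. isomorphic in the derived category), then P^• and Q^• are isomorphic as cochain complexes. -/

import Mathlib

open CategoryTheory Limits

universe u

section Defs

variable {A : Type u} [Ring A]

/-- The degreewise direct sum of a finite family of cochain complexes of modules. -/
noncomputable def sumComplex {s : ℕ} (G : Fin s → CochainComplex (ModuleCat.{u} A) ℤ) :
    CochainComplex (ModuleCat.{u} A) ℤ where
  X i := ModuleCat.of A (∀ j, (G j).X i)
  d i i' := ModuleCat.ofHom (LinearMap.pi fun j => ((G j).d i i').hom.comp (LinearMap.proj j))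
  shape i i' h := by
    apply ModuleCat.hom_ext
    apply LinearMap.ext
    intro v
    funext j
    simp [(G j).shape i i' h]
    rfl
  d_comp_d' i i' i'' _ _ := by
    apply ModuleCat.hom_ext
    apply LinearMap.ext
    intro v
    funext j
    simp
    rw [show ((G j).d i' i'').hom (((G j).d i i').hom (v j))
        = ((G j).d i i' ≫ (G j).d i' i'').hom (v j) from rfl, (G j).d_comp_d i i' i'']
    rfl

/-- A complex is supported in the interval `[a, b]` if it has trivial terms outside. -/
def SupportedIn (K : CochainComplex (ModuleCat.{u} A) ℤ) (a b : ℤ) : Prop :=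
  ∀ i : ℤ, (i < a ∨ b < i) → IsZero (K.X i)

/-- A perfect complex: a bounded cochain complex of finitely generated projective modules. -/
def IsPerfect (K : CochainComplex (ModuleCat.{u} A) ℤ) : Prop :=
  (∀ i : ℤ, Module.Finite A (K.X i) ∧ Module.Projective A (K.X i)) ∧
    ∃ a b : ℤ, SupportedIn K a b

/-- The complex has length at most `r`, i.e. it is supported in an interval `[a, a + r]`. -/
def LengthLE (K : CochainComplex (ModuleCat.{u} A) ℤ) (r : ℕ) : Prop :=
  ∃ a : ℤ, SupportedIn K a (a + r)

/-- Two complexes are quasi-isomorphic (isomorphic in the derived category) iff they are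
linked by a roof of quasi-isomorphisms. -/
def QuasiIsomorphic (K L : CochainComplex (ModuleCat.{u} A) ℤ) : Prop :=
  ∃ (Z : CochainComplex (ModuleCat.{u} A) ℤ) (f : Z ⟶ K) (g : Z ⟶ L),
    QuasiIso f ∧ QuasiIso g

end Defs

/-- A ring is strongly `r`-regular if every perfect complex is quasi-isomorphic to a finite
direct sum of perfect complexes of length at most `r`. -/
def IsStronglyRegularOfOrder (A : Type u) [Ring A] (r : ℕ) : Prop :=
  ∀ K : CochainComplex (ModuleCat.{u} A) ℤ, IsPerfect K →
    ∃ (s : ℕ) (G : Fin s → CochainComplex (ModuleCat.{u} A) ℤ),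
      (∀ j, IsPerfect (G j) ∧ LengthLE (G j) r) ∧ QuasiIsomorphic K (sumComplex G)

/-- A ring is strongly regular if it is strongly `r`-regular for some `r ≥ 0`. -/
def IsStronglyRegular (A : Type u) [Ring A] : Prop :=
  ∃ r : ℕ, IsStronglyRegularOfOrder A r

/-- A bounded complex of finite free modules over a local ring is minimal if its
differentials map into `m` times the target. -/
def IsMinimal {A : Type u} [CommRing A] [IsLocalRing A]
    (P : CochainComplex (ModuleCat.{u} A) ℤ) : Prop :=
  ∀ (i j : ℤ) (v : P.X i),
    P.d i j v ∈ (IsLocalRing.maximalIdeal A) • (⊤ : Submodule A (P.X j))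

/-- A bounded complex of finite free modules. -/
def IsFiniteFreeBounded {A : Type u} [Ring A] (P : CochainComplex (ModuleCat.{u} A) ℤ) : Prop :=
  (∀ i : ℤ, Module.Finite A (P.X i) ∧ Module.Free A (P.X i)) ∧ ∃ a b : ℤ, SupportedIn P a b

/-!
Both complexes are bounded above complexes of projectives, hence K-projective, so the roof of
quasi-isomorphisms between them can be replaced by a homotopy equivalence `f : P ⟶ Q` with
homotopy inverse `g`. On a minimal complex, an endomorphism `e` homotopic to the identity
satisfies `e - 𝟙 = dH + Hd`, whose image lies in `m • P`; so `e` is degreewise surjective by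
Nakayama, and then bijective since surjective endomorphisms of finite modules are injective.
Applied to `g ≫ f` and `f ≫ g`, this makes `f` an isomorphism.
-/

open HomologicalComplex

namespace CochainComplex

variable {C : Type*} [Category C] [Abelian C]

lemma IsKProjective.exists_quasiIso_of_quasiIso {K Z : CochainComplex C ℤ} [K.IsKProjective]
    (s : Z ⟶ K) [QuasiIso s] : ∃ σ : K ⟶ Z, QuasiIso σ := by
  let := HasDerivedCategory.standard C
  obtain ⟨g, hg⟩ := (Qh_map_bijective K ((HomotopyCategory.quotient _ _).obj Z)).surjective
    ((DerivedCategory.quotientCompQhIso C).hom.app K ≫ inv (DerivedCategory.Q.map s) ≫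
      (DerivedCategory.quotientCompQhIso C).inv.app Z)
  obtain ⟨σ, rfl⟩ := (HomotopyCategory.quotient _ _).map_surjective g
  have hσ : DerivedCategory.Q.map σ = inv (DerivedCategory.Q.map s) := by
    rw [← cancel_epi ((DerivedCategory.quotientCompQhIso C).hom.app K),
      ← DerivedCategory.quotientCompQhIso_hom_naturality, hg]
    simp
  refine ⟨σ, (DerivedCategory.isIso_Q_map_iff_quasiIso (C := C) σ).1 ?_⟩
  rw [hσ]
  infer_instance

lemma nonempty_homotopyEquiv_of_roof {K Z L : CochainComplex C ℤ} [K.IsKProjective]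
    [L.IsKProjective] (s : Z ⟶ K) (t : Z ⟶ L) [QuasiIso s] [QuasiIso t] :
    Nonempty (HomotopyEquiv K L) := by
  obtain ⟨σ, _⟩ := IsKProjective.exists_quasiIso_of_quasiIso s
  obtain ⟨e, -⟩ := (IsKProjective.quasiIso_iff (σ ≫ t)).1 inferInstance
  exact ⟨e⟩

end CochainComplex

lemma IsFiniteFreeBounded.isKProjective {A : Type u} [Ring A]
    {P : CochainComplex (ModuleCat.{u} A) ℤ} (hP : IsFiniteFreeBounded P) : P.IsKProjective := by
  obtain ⟨hfree, _, b, hsupp⟩ := hP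
  have : P.IsStrictlyLE b := (P.isStrictlyLE_iff b).2 fun i hi => hsupp i (Or.inr hi)
  have (i : ℤ) : Module.Free A (P.X i) := (hfree i).2
  exact CochainComplex.isKProjective_of_projective P b

section Minimal

open IsLocalRing

variable {A : Type u} [CommRing A] [IsLocalRing A]

lemma LinearMap.bijective_of_forall_sub_mem_smul_top {M : Type*} [AddCommGroup M] [Module A M]
    [Module.Finite A M] (f : M →ₗ[A] M) (hf : ∀ x, f x - x ∈ maximalIdeal A • (⊤ : Submodule A M)) :
    Function.Bijective f := by
  refine OrzechProperty.bijective_of_surjective_endomorphism f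
    (f.surjective_of_surjective_comp_mkQ _ (maximalIdeal_le_jacobson _) fun y => ?_)
  obtain ⟨y, rfl⟩ := Submodule.mkQ_surjective _ y
  exact ⟨y, (Submodule.Quotient.eq _).2 (hf y)⟩

lemma IsMinimal.sub_mem_of_homotopy {P Q : CochainComplex (ModuleCat.{u} A) ℤ}
    (hP : IsMinimal P) (hQ : IsMinimal Q) {f g : P ⟶ Q} (H : Homotopy f g) (i : ℤ) (x : P.X i) :
    f.f i x - g.f i x ∈ maximalIdeal A • (⊤ : Submodule A (Q.X i)) := by
  have hcomm := congr($(H.comm i) x)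
  rw [dNext_eq _ (show (ComplexShape.up ℤ).Rel i (i+1) by simp),
    prevD_eq _ (show (ComplexShape.up ℤ).Rel (i-1) i by simp)] at hcomm
  rw [hcomm]
  simp only [ModuleCat.hom_add, ModuleCat.hom_comp, LinearMap.add_apply, LinearMap.coe_comp,
    Function.comp_apply, add_sub_cancel_right]
  exact Submodule.add_mem _
    (Submodule.smul_top_le_comap_smul_top _ (H.hom (i+1) i).hom (hP i (i+1) x)) (hQ (i-1) i _)

lemma IsMinimal.isIso_of_homotopy_id {P : CochainComplex (ModuleCat.{u} A) ℤ} (hP : IsMinimal P)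
    [∀ i, Module.Finite A (P.X i)] {e : P ⟶ P} (H : Homotopy e (𝟙 P)) : IsIso e := by
  have (i : ℤ) : IsIso (e.f i) :=
    (ConcreteCategory.isIso_iff_bijective _).2
      ((e.f i).hom.bijective_of_forall_sub_mem_smul_top (hP.sub_mem_of_homotopy hP H i))
  exact Hom.isIso_of_components e

lemma HomotopyEquiv.isIso_hom_of_isMinimal {P Q : CochainComplex (ModuleCat.{u} A) ℤ}
    (hP : IsMinimal P) (hQ : IsMinimal Q) [∀ i, Module.Finite A (P.X i)]
    [∀ i, Module.Finite A (Q.X i)] (e : HomotopyEquiv P Q) : IsIso e.hom := by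
  have := hP.isIso_of_homotopy_id e.homotopyHomInvId
  have := hQ.isIso_of_homotopy_id e.homotopyInvHomId
  have : Mono e.hom := mono_of_mono e.hom e.inv
  have : Epi e.hom := epi_of_epi e.inv e.hom
  exact isIso_of_mono_of_epi e.hom

end Minimal

theorem statement7_general (A : Type u) [CommRing A] [IsLocalRing A]
    (P Q : CochainComplex (ModuleCat.{u} A) ℤ)
    (hP : IsFiniteFreeBounded P) (hQ : IsFiniteFreeBounded Q)
    (hPmin : IsMinimal P) (hQmin : IsMinimal Q)
    (h : QuasiIsomorphic P Q) : Nonempty (P ≅ Q) := by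
  have := hP.isKProjective
  have := hQ.isKProjective
  have (i : ℤ) : Module.Finite A (P.X i) := (hP.1 i).1
  have (i : ℤ) : Module.Finite A (Q.X i) := (hQ.1 i).1
  obtain ⟨Z, s, t, _, _⟩ := h
  obtain ⟨e⟩ := CochainComplex.nonempty_homotopyEquiv_of_roof s t
  have := e.isIso_hom_of_isMinimal hPmin hQmin
  exact ⟨asIso e.hom⟩

/-- Over a local noetherian ring, two quasi-isomorphic minimal bounded
complexes of finite free modules are isomorphic as complexes. -/
theorem statement7 (A : Type u) [CommRing A] [IsLocalRing A] [IsNoetherianRing A]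
    (P Q : CochainComplex (ModuleCat.{u} A) ℤ)
    (hP : IsFiniteFreeBounded P) (hQ : IsFiniteFreeBounded Q)
    (hPmin : IsMinimal P) (hQmin : IsMinimal Q)
    (h : QuasiIsomorphic P Q) : Nonempty (P ≅ Q) :=
  statement7_general A P Q hP hQ hPmin hQmin h
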